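/- arXiv:2601.15563 — 7 statements merged into one kernel-verified Lean document; each statement's English description precedes it below -/
import Mathlib

section
/- Suppose SW(b) > SW(c) for alternatives b, c. Then there exists a budget-balanced transfer scheme τ : N × A → ℝ such that (i) u_i(b)+τ_i(b) ≥ u_i(c) for every agent i, with strict inequality for at least one agent, and (ii) b is fully covered under u+τ, i.e., u_i(b)+τ_i(b) ≥ u_i(a)+τ_i(a) for all i and all a ∈ A. -/
/-- If `b` is a welfare maximizer and `SW b > SW c`, then there is a
budget-balanced transfer scheme `τ` such that every agent weakly prefers `b` under
`u + τ` to `c` under `u` (strictly for at least one agent), and `b` is fully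
covered under `u + τ`. -/
theorem exists_IR_transfers_to_welfare_maximizer
    {N A : Type} [Fintype N] [Fintype A] [Nonempty N]
    (u : N → A → ℝ) (b c : A)
    (hmax : ∀ a : A, ∑ i, u i a ≤ ∑ i, u i b)
    (hgt : ∑ i, u i b > ∑ i, u i c) :
    ∃ τ : N → A → ℝ,
      (∀ a : A, ∑ i, τ i a = 0) ∧
      (∀ i : N, u i b + τ i b ≥ u i c) ∧
      (∃ i : N, u i b + τ i b > u i c) ∧
      (∀ (i : N) (a : A), u i b + τ i b ≥ u i a + τ i a) := by
  classical
  set n : ℝ := (Fintype.card N : ℝ) with hn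
  have hnpos : (0:ℝ) < n := by
    simp [hn, Fintype.card_pos]
  set δ : ℝ := (∑ i, u i b - ∑ i, u i c) / n with hδ
  have hδpos : 0 < δ := div_pos (by linarith) hnpos
  set i0 : N := Classical.arbitrary N with hi0
  refine ⟨fun i a => u i c + δ - u i a - (if i = i0 then (∑ j, u j b - ∑ j, u j a) else 0),
    ?_, ?_, ?_, ?_⟩
  · intro a
    have h1 : ∑ i : N, (if i = i0 then (∑ j, u j b - ∑ j, u j a) else 0)
        = ∑ j, u j b - ∑ j, u j a := by
      simp
    have h2 : ∑ i : N, (u i c + δ - u i a - (if i = i0 then (∑ j, u j b - ∑ j, u j a) else 0))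
        = ∑ i, u i c + n * δ - ∑ i, u i a - (∑ j, u j b - ∑ j, u j a) := by
      rw [Finset.sum_sub_distrib, Finset.sum_sub_distrib, Finset.sum_add_distrib, h1]
      simp [hn, mul_comm]
    rw [h2]
    have : n * δ = ∑ i, u i b - ∑ i, u i c := by
      rw [hδ, mul_div_cancel₀]
      exact ne_of_gt hnpos
    linarith
  · intro i
    simp only []
    have : u i b + (u i c + δ - u i b - (if i = i0 then (∑ j, u j b - ∑ j, u j b) else 0))
        = u i c + δ := by
      split <;> ring
    rw [this]
    linarith
  · refine ⟨i0, ?_⟩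
    have : u i0 b + (u i0 c + δ - u i0 b - (if i0 = i0 then (∑ j, u j b - ∑ j, u j b) else 0))
        = u i0 c + δ := by simp
    rw [this]
    linarith
  · intro i a
    have hb : u i b + (u i c + δ - u i b - (if i = i0 then (∑ j, u j b - ∑ j, u j b) else 0))
        = u i c + δ := by split <;> ring
    have ha : u i a + (u i c + δ - u i a - (if i = i0 then (∑ j, u j b - ∑ j, u j a) else 0))
        = u i c + δ - (if i = i0 then (∑ j, u j b - ∑ j, u j a) else 0) := by ring
    rw [hb, ha]
    have := hmax a
    split <;> linarith
end

section
/- Let b be fully covered under u+τ with τ budget balanced, and suppose u_i(b)+τ_i(b) ≥ u_i(a*) for all agents i (IR relative to the default a*), and suppose SW(b) ≥ SW(a*). Then there is no budget-balanced transfer scheme τ' and set S' ⊆ N such that every i ∈ S' satisfies u_i(a*)+τ'_i(a*) ≥ u_i(b)+τ_i(b), at least one i ∈ S' has strict inequality, and every i ∉ S' satisfies u_i(a*)+τ'_i(a*) ≥ u_i(a*). -/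
/-- Lemma 2 of the paper: once a welfare-maximizing alternative `b`
with full coverage is established via IR-feasible transfers, no individually
rational coalitional deviation can restore the default `a*`. -/
theorem no_IR_deviation_back_to_default
    {N A : Type} [Fintype N]
    (u τ τ' : N → A → ℝ) (b astar : A) (S' : Finset N)
    (hbb : ∀ a : A, ∑ i, τ i a = 0)
    (hbb' : ∀ a : A, ∑ i, τ' i a = 0)
    (hfc : ∀ (i : N) (a : A), u i b + τ i b ≥ u i a + τ i a)
    (hIR : ∀ i : N, u i b + τ i b ≥ u i astar)
    (hS : ∀ i ∈ S', u i astar + τ' i astar ≥ u i b + τ i b)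
    (hstrict : ∃ i ∈ S', u i astar + τ' i astar > u i b + τ i b)
    (hout : ∀ i ∉ S', u i astar + τ' i astar ≥ u i astar)
    (hSW : ∑ i, u i b ≥ ∑ i, u i astar) :
    False := by
  classical
  obtain ⟨j, hjS, hj⟩ := hstrict
  have h1 : ∑ i, (if i ∈ S' then u i b + τ i b else u i astar)
      < ∑ i, (u i astar + τ' i astar) := by
    apply Finset.sum_lt_sum
    · intro i _
      by_cases hi : i ∈ S' <;> simp [hi]
      · exact hS i hi
      · linarith [hout i hi]
    · exact ⟨j, Finset.mem_univ j, by simp [hjS, hj]⟩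
  have h2 : ∑ i, u i astar ≤ ∑ i, (if i ∈ S' then u i b + τ i b else u i astar) := by
    apply Finset.sum_le_sum
    intro i _
    by_cases hi : i ∈ S' <;> simp [hi]
    exact hIR i
  have h3 : ∑ i, (u i astar + τ' i astar) = ∑ i, u i astar := by
    rw [Finset.sum_add_distrib, hbb' astar, add_zero]
  linarith
end

section
/- Under the consensus rule, suppose b is fully covered under base utilities u (u_i(b) ≥ u_i(a) for all i, a) and τ is a budget-balanced transfer scheme. If S ⊆ N is such that u_i(a*)+τ_i(a*) ≥ u_i(b) for all i ∈ S with strict inequality for some i ∈ S, and every agent j with τ_j(a*) < 0 belongs to S, then a contradiction follows. -/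
/-- Case (II) of Proposition 2: if `b` is fully covered under the
base utilities and every net donor at the default `a*` must belong to the
coalition `S`, then no coalition can individually-rationally sustain the
default `a*`. -/
theorem truthful_SNE_case_II
    {N A : Type} [Fintype N]
    (u τ : N → A → ℝ) (b astar : A) (S : Finset N)
    (hbb : ∑ i, τ i astar = 0)
    (hfc : ∀ (i : N) (a : A), u i b ≥ u i a)
    (hIR : ∀ i ∈ S, u i astar + τ i astar ≥ u i b)
    (hstrict : ∃ i ∈ S, u i astar + τ i astar > u i b)
    (hpart : ∀ j : N, τ j astar < 0 → j ∈ S) :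
    False := by
  have hnn : ∀ i : N, 0 ≤ τ i astar := by
    intro i
    by_contra h
    push_neg at h
    have hiS := hpart i h
    have := hIR i hiS
    have := hfc i astar
    linarith
  obtain ⟨i, hiS, hi⟩ := hstrict
  have hpos : 0 < τ i astar := by
    have := hfc i astar
    linarith
  have : 0 < ∑ j, τ j astar :=
    Finset.sum_pos' (fun j _ => hnn j) ⟨i, Finset.mem_univ i, hpos⟩
  linarith
end

section
/- Let b be fully covered under u+τ and suppose there is an agent i with τ_i(b) > 0 and strict slack at b: u_i(b)+τ_i(b) > u_i(a)+τ_i(a) for all a ≠ b (condition P1). If there exists an agent j with τ_j(b) < 0, then, setting β equal to the minimum over a ≠ b of U_i(b) − U_i(a), the modified transfer scheme τ' defined by τ'_i(b) = τ_i(b) − β/2, τ'_j(b) = τ_j(b) + β/2, and τ'_k(a) = τ_k(a) otherwise, is budget balanced, still gives b full coverage under u+τ', and strictly increases j's utility at b while leaving every agent other than i weakly better off at b. -/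
/-- sufficiency of condition (P1) in Lemma 3: a receiver `i` with
strict slack at the fully covered winner `b` enables a donor `j` to capture half
of the slack: the modified scheme `τ'` is budget balanced, preserves full
coverage of `b`, strictly benefits `j` at `b`, and leaves everyone except `i`
weakly better off at `b`. -/
theorem P1_deviation
    {N A : Type} [Fintype N] [Fintype A] [DecidableEq N] [DecidableEq A]
    (u τ : N → A → ℝ) (b : A) (i j : N)
    (hA : (Finset.univ.erase b).Nonempty)
    (hbb : ∀ a : A, ∑ k, τ k a = 0)
    (hfc : ∀ (k : N) (a : A), u k b + τ k b ≥ u k a + τ k a)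
    (hi : τ i b > 0)
    (hslack : ∀ a : A, a ≠ b → u i b + τ i b > u i a + τ i a)
    (hj : τ j b < 0)
    (β : ℝ)
    (hβ : β = (Finset.univ.erase b).inf' hA
      (fun a => (u i b + τ i b) - (u i a + τ i a)))
    (τ' : N → A → ℝ)
    (hτ' : ∀ (k : N) (a : A), τ' k a =
      if k = i ∧ a = b then τ i b - β / 2
      else if k = j ∧ a = b then τ j b + β / 2
      else τ k a) :
    (∀ a : A, ∑ k, τ' k a = 0) ∧
    (∀ (k : N) (a : A), u k b + τ' k b ≥ u k a + τ' k a) ∧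
    (u j b + τ' j b > u j b + τ j b) ∧
    (∀ k : N, k ≠ i → u k b + τ' k b ≥ u k b + τ k b) := by
  have hij : i ≠ j := by
    intro h; rw [h] at hi; linarith
  have hβpos : 0 < β := by
    rw [hβ, Finset.lt_inf'_iff]
    intro a ha
    have := hslack a (Finset.ne_of_mem_erase ha)
    linarith
  have hβle : ∀ a : A, a ≠ b → β ≤ (u i b + τ i b) - (u i a + τ i a) := by
    intro a hab
    rw [hβ]
    exact Finset.inf'_le _ (Finset.mem_erase.2 ⟨hab, Finset.mem_univ a⟩)
  have hne : ∀ (k : N) (a : A), a ≠ b → τ' k a = τ k a := by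
    intro k a hab
    rw [hτ' k a, if_neg (by tauto), if_neg (by tauto)]
  have hib : τ' i b = τ i b - β / 2 := by rw [hτ', if_pos ⟨rfl, rfl⟩]
  have hjb : τ' j b = τ j b + β / 2 := by
    rw [hτ', if_neg (by tauto), if_pos ⟨rfl, rfl⟩]
  have hkb : ∀ k : N, k ≠ i → k ≠ j → τ' k b = τ k b := by
    intro k hki hkj
    rw [hτ', if_neg (by tauto), if_neg (by tauto)]
  refine ⟨?_, ?_, ?_, ?_⟩
  · intro a
    by_cases hab : a = b
    · subst hab
      have : ∀ k : N, τ' k a = τ k a + (if k = i then -(β/2) else 0)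
          + (if k = j then β/2 else 0) := by
        intro k
        by_cases hki : k = i
        · subst hki; rw [hib, if_pos rfl, if_neg hij]; ring
        · by_cases hkj : k = j
          · subst hkj; rw [hjb, if_neg hki, if_pos rfl]; ring
          · rw [hkb k hki hkj, if_neg hki, if_neg hkj]; ring
      rw [Finset.sum_congr rfl (fun k _ => this k)]
      rw [Finset.sum_add_distrib, Finset.sum_add_distrib,
        Finset.sum_ite_eq' Finset.univ i, Finset.sum_ite_eq' Finset.univ j,
        if_pos (Finset.mem_univ i), if_pos (Finset.mem_univ j), hbb a]
      ring
    · rw [Finset.sum_congr rfl (fun k _ => hne k a hab)]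
      exact hbb a
  · intro k a
    by_cases hab : a = b
    · subst hab; exact le_refl _
    · rw [hne k a hab]
      by_cases hki : k = i
      · subst hki
        rw [hib]
        have := hβle a hab
        linarith
      · by_cases hkj : k = j
        · subst hkj; rw [hjb]; have := hfc k a; linarith
        · rw [hkb k hki hkj]; exact hfc k a
  · rw [hjb]; linarith
  · intro k hki
    by_cases hkj : k = j
    · subst hkj; rw [hjb]; linarith
    · rw [hkb k hki hkj]
end

section
/- Suppose b is fully covered under u+τ with τ budget balanced, τ_i(b) = 0 for all agents i, and c is another social-welfare maximizer (SW(c) = SW(b) = max_a SW(a)). Then u_i(b) = U_i(c) for all i, and any budget-balanced τ' under which c is fully covered and u_i(c)+τ'_i(c) ≥ u_i(b) for all i in a coalition S' (strict for some member) with every agent j satisfying τ'_j(b) < τ_j(b) or (τ_j(b) ≥ 0 and τ'_j(b) < 0) belonging to S', leads to a contradiction. -/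
/-- preliminary case of the necessity direction of Lemma 3:
if `b` is fully covered under `u+τ` with zero transfers at `b`, and `c` is
another welfare maximizer, then `u_i(b) = U_i(c)` for all `i`, and no
IR-feasible deviation to `c` (with observable participation) exists. -/
theorem no_deviation_with_zero_transfers_at_b
    {N A : Type} [Fintype N]
    (u τ : N → A → ℝ) (b c : A)
    (hbb : ∀ a : A, ∑ i, τ i a = 0)
    (hfc : ∀ (i : N) (a : A), u i b + τ i b ≥ u i a + τ i a)
    (hzero : ∀ i : N, τ i b = 0)
    (hmax : ∀ a : A, ∑ i, u i a ≤ ∑ i, u i b)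
    (hc : ∑ i, u i c = ∑ i, u i b) :
    (∀ i : N, u i b = u i c + τ i c) ∧
    (∀ (τ' : N → A → ℝ) (S' : Finset N),
      (∀ a : A, ∑ i, τ' i a = 0) →
      (∀ (i : N) (a : A), u i c + τ' i c ≥ u i a + τ' i a) →
      (∀ i ∈ S', u i c + τ' i c ≥ u i b) →
      (∃ i ∈ S', u i c + τ' i c > u i b) →
      (∀ j : N, (τ' j b < τ j b ∨ (τ j b ≥ 0 ∧ τ' j b < 0)) → j ∈ S') →
      False) := by
  have hle : ∀ i : N, u i c + τ i c ≤ u i b := by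
    intro i
    have := hfc i c
    rw [hzero i] at this
    linarith
  have hsum : ∑ i, (u i c + τ i c) = ∑ i, u i b := by
    rw [Finset.sum_add_distrib, hbb c, add_zero, hc]
  have heq : ∀ i : N, u i b = u i c + τ i c := by
    have := (Finset.sum_eq_sum_iff_of_le (fun i _ => hle i)).mp hsum
    intro i; exact (this i (Finset.mem_univ i)).symm
  refine ⟨heq, ?_⟩
  intro τ' S' hbb' hfc' hIR ⟨i0, hi0S, hi0⟩ hmem
  -- full coverage of c under τ' applied at b
  have hle' : ∀ i : N, u i b + τ' i b ≤ u i c + τ' i c := fun i => hfc' i b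
  have hsum' : ∑ i, (u i b + τ' i b) = ∑ i, (u i c + τ' i c) := by
    rw [Finset.sum_add_distrib, Finset.sum_add_distrib, hbb' b, hbb' c, hc]
  have heq' : ∀ i : N, u i b + τ' i b = u i c + τ' i c := by
    have := (Finset.sum_eq_sum_iff_of_le (fun i _ => hle' i)).mp hsum'
    intro i; exact this i (Finset.mem_univ i)
  -- every τ' j b is nonneg
  have hnn : ∀ i : N, 0 ≤ τ' i b := by
    intro i
    by_contra h
    push_neg at h
    have hiS : i ∈ S' := hmem i (Or.inl (by rw [hzero i]; exact h))
    have := hIR i hiS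
    have := heq' i
    linarith
  have hz : ∀ i ∈ Finset.univ, τ' i b = 0 :=
    (Finset.sum_eq_zero_iff_of_nonneg (fun i _ => hnn i)).mp (hbb' b)
  have := heq' i0
  have := hz i0 (Finset.mem_univ i0)
  linarith
end

section
/- Define the reallocatable amount RA(j, S, â) = Σ_{i∈S} max(0, −τ_i(â)) + max(0, −τ_j(â)), where S_j(â) = { i ≠ j : U_i(b) = U_i(â) and τ_i(â) < 0 }. Suppose RA(j, S_j(â), â) > U_j(b) − U_j(â), and let R̄ = { i ≠ j : τ_i(â) > 0 } satisfy Σ_{i∈R̄} τ_i(â) ≥ RA(j, S_j(â), â). Then there exist nonnegative reals (β_i)_{i∈R̄} with β_i ≤ τ_i(â) and Σ_{i∈R̄} β_i = RA(j, S_j(â), â), and the scheme τ' given by τ'_j(â) = τ_j(â) + RA(j, S_j(â), â), τ'_i(â) = τ_i(â) − β_i for i ∈ R̄, τ' = τ elsewhere, is budget balanced and satisfies u_j(â)+τ'_j(â) > u_j(b)+τ_j(b). -/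
open Finset

/-- The receivers fund the amount `r` in proportion to their transfers: `β i = (r / ∑ f) * f i`. -/
theorem Finset.exists_nonneg_le_sum_eq {ι : Type*} (s : Finset ι) (f : ι → ℝ)
    (hf : ∀ i ∈ s, 0 ≤ f i) {r : ℝ} (hr : 0 ≤ r) (hrs : r ≤ ∑ i ∈ s, f i) :
    ∃ β : ι → ℝ, (∀ i ∈ s, 0 ≤ β i ∧ β i ≤ f i) ∧ ∑ i ∈ s, β i = r := by
  set S := ∑ i ∈ s, f i
  have hS : 0 ≤ S := hr.trans hrs
  refine ⟨fun i => r / S * f i, fun i hi => ⟨by have := hf i hi; positivity, ?_⟩, ?_⟩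
  · exact mul_le_of_le_one_left (hf i hi) (div_le_one_of_le₀ hrs hS)
  · rw [← mul_sum]
    rcases hS.eq_or_lt with h0 | hpos
    · rw [← h0, div_zero, zero_mul]
      linarith
    · exact div_mul_cancel₀ r hpos.ne'

theorem Finset.sum_ite_reallocate {ι : Type*} [Fintype ι] [DecidableEq ι]
    (g β : ι → ℝ) (j : ι) (R : Finset ι) (hj : j ∉ R) {r : ℝ} (hr : ∑ i ∈ R, β i = r) :
    ∑ k, (if k = j then g j + r else if k ∈ R then g k - β k else g k) = ∑ k, g k := by
  have hsplit : ∀ k, (if k = j then g j + r else if k ∈ R then g k - β k else g k)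
      = g k + (if k = j then r else 0) - (if k ∈ R then β k else 0) := by
    intro k
    by_cases hkj : k = j
    · subst hkj; simp [hj]
    · by_cases hkR : k ∈ R <;> simp [hkj, hkR]
  simp only [hsplit, sum_sub_distrib, sum_add_distrib, sum_ite_eq', mem_univ, if_true,
    sum_ite_mem, univ_inter, hr]
  ring

theorem RA_sufficiency_general
    {N A : Type} [Fintype N] [DecidableEq N] [DecidableEq A]
    (u τ : N → A → ℝ) (b ahat : A) (j : N)
    (hbb : ∀ a : A, ∑ i, τ i a = 0)
    (hfc : ∀ (i : N) (a : A), u i b + τ i b ≥ u i a + τ i a)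
    (Rbar : Finset N)
    (hRbar : ∀ i : N, i ∈ Rbar ↔ i ≠ j ∧ τ i ahat > 0)
    (RA : ℝ)
    (hgap : RA > (u j b + τ j b) - (u j ahat + τ j ahat))
    (hfund : ∑ i ∈ Rbar, τ i ahat ≥ RA) :
    ∃ β : N → ℝ,
      (∀ i ∈ Rbar, 0 ≤ β i ∧ β i ≤ τ i ahat) ∧
      (∑ i ∈ Rbar, β i = RA) ∧
      ∀ τ' : N → A → ℝ,
        (∀ (k : N) (a : A), τ' k a =
          if a = ahat then
            (if k = j then τ j ahat + RA
             else if k ∈ Rbar then τ k ahat - β k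
             else τ k ahat)
          else τ k a) →
        (∀ a : A, ∑ i, τ' i a = 0) ∧
        (u j ahat + τ' j ahat > u j b + τ j b) := by
  have hRA : 0 ≤ RA := by linarith [hfc j ahat]
  have hjR : j ∉ Rbar := fun h => ((hRbar j).1 h).1 rfl
  obtain ⟨β, hβ, hβsum⟩ := Rbar.exists_nonneg_le_sum_eq (τ · ahat)
    (fun i hi => ((hRbar i).1 hi).2.le) hRA hfund
  refine ⟨β, hβ, hβsum, fun τ' hτ' => ⟨fun a => ?_, ?_⟩⟩
  · by_cases ha : a = ahat
    · subst ha
      simp only [hτ', if_true]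
      rw [sum_ite_reallocate (τ · a) β j Rbar hjR hβsum, hbb]
    · simp only [hτ', ha, if_false, hbb]
  · simp only [hτ', if_true]
    linarith

/-- sufficiency half of Proposition 4: when the reallocatable
amount `RA(j, S_j(â), â)` exceeds agent `j`'s utility gap between `b` and `â`,
there is a budget-balanced redistribution (funded by receivers `R̄` at `â`)
making `j` strictly prefer `â` under `τ'` to `b` under `τ`. -/
theorem RA_sufficiency
    {N A : Type} [Fintype N] [Fintype A] [DecidableEq N] [DecidableEq A]
    (u τ : N → A → ℝ) (b ahat : A) (j : N)
    (hbb : ∀ a : A, ∑ i, τ i a = 0)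
    (hfc : ∀ (i : N) (a : A), u i b + τ i b ≥ u i a + τ i a)
    (hne : ahat ≠ b)
    (Sj : Finset N)
    (hSj : ∀ i : N, i ∈ Sj ↔
      i ≠ j ∧ u i b + τ i b = u i ahat + τ i ahat ∧ τ i ahat < 0)
    (Rbar : Finset N)
    (hRbar : ∀ i : N, i ∈ Rbar ↔ i ≠ j ∧ τ i ahat > 0)
    (RA : ℝ)
    (hRA : RA = (∑ i ∈ Sj, max 0 (-(τ i ahat))) + max 0 (-(τ j ahat)))
    (hgap : RA > (u j b + τ j b) - (u j ahat + τ j ahat))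
    (hfund : ∑ i ∈ Rbar, τ i ahat ≥ RA) :
    ∃ β : N → ℝ,
      (∀ i ∈ Rbar, 0 ≤ β i ∧ β i ≤ τ i ahat) ∧
      (∑ i ∈ Rbar, β i = RA) ∧
      ∀ τ' : N → A → ℝ,
        (∀ (k : N) (a : A), τ' k a =
          if a = ahat then
            (if k = j then τ j ahat + RA
             else if k ∈ Rbar then τ k ahat - β k
             else τ k ahat)
          else τ k a) →
        (∀ a : A, ∑ i, τ' i a = 0) ∧
        (u j ahat + τ' j ahat > u j b + τ j b) :=
  RA_sufficiency_general u τ b ahat j hbb hfc Rbar hRbar RA hgap hfund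
end

section
/- Consider Algorithm 1's construction: order alternatives 1, …, m by weakly decreasing social welfare with default a* not welfare-maximal; set τ_i(a*) = 0 for all i; for t > a*, set U_i(t) = (SW(t)/SW(a*))·u_i(a*) and τ_i(t) = U_i(t) − u_i(t) (assuming SW(a*) > 0 and u ≥ 0); for t < a*, proceeding downward, set τ_i(t) = U_i(t+1) − u_i(t) for receivers (u_i(t) < U_i(t+1)) and distribute the deficit among donors (u_i(t) > U_i(t+1)) so each donor retains u_i(t)+τ_i(t) ≥ U_i(t+1). Then the resulting τ is budget balanced at every alternative and alternative 1 is fully covered under u+τ, i.e., U_i(1) ≥ U_i(a) for all i and all a. -/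
/-- Algorithm 1: the transfer scheme constructed by Algorithm 1
(alternatives `0, …, m-1` ordered by weakly decreasing social welfare, default
`a*` not welfare-maximal) is budget balanced at every alternative, and
alternative `0` is fully covered under `u + τ`. -/
theorem algorithm1_budget_balanced_and_full_coverage
    {N : Type} [Fintype N] [Nonempty N]
    (m : ℕ) (hm : 1 ≤ m) (astar : ℕ) (hastar : astar < m)
    (u : N → ℕ → ℝ) (hu : ∀ (i : N) (t : ℕ), 0 ≤ u i t)
    (SW : ℕ → ℝ) (hSW : ∀ t : ℕ, SW t = ∑ i, u i t)
    (hdec : ∀ s t : ℕ, s ≤ t → t < m → SW t ≤ SW s)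
    (hpos : SW astar > 0)
    (hnotmax : SW astar < SW 0)
    (τ U : N → ℕ → ℝ)
    (hU : ∀ (i : N) (t : ℕ), U i t = u i t + τ i t)
    (hstar : ∀ i : N, τ i astar = 0)
    (hhigh : ∀ (i : N) (t : ℕ), astar < t → t < m →
      τ i t = (SW t / SW astar) * u i astar - u i t)
    (hrec : ∀ (i : N) (t : ℕ), t < astar → u i t < U i (t + 1) →
      τ i t = U i (t + 1) - u i t)
    (hdon : ∀ (i : N) (t : ℕ), t < astar → u i t > U i (t + 1) →
      u i t + τ i t ≥ U i (t + 1) ∧ τ i t ≤ 0)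
    (hneu : ∀ (i : N) (t : ℕ), t < astar → u i t = U i (t + 1) → τ i t = 0)
    (hbal : ∀ t : ℕ, t < astar → ∑ i, τ i t = 0) :
    (∀ t : ℕ, t < m → ∑ i, τ i t = 0) ∧
    (∀ (i : N) (t : ℕ), t < m → U i 0 ≥ U i t) := by
  have hstep : ∀ (i : N) (t : ℕ), t < astar → U i t ≥ U i (t + 1) := by
    intro i t ht
    rcases lt_trichotomy (u i t) (U i (t + 1)) with h | h | h
    · rw [hU, hrec i t ht h]; linarith
    · rw [hU, hneu i t ht h]; linarith
    · have := (hdon i t ht h).1; rw [hU]; linarith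
  have hchain : ∀ (i : N) (t : ℕ), t ≤ astar → U i 0 ≥ U i t := by
    intro i t
    induction t with
    | zero => intro _; exact le_refl _
    | succ n ih =>
      intro h
      have h1 : n < astar := h
      exact le_trans (hstep i n h1) (ih (le_of_lt h1))
  constructor
  · intro t htm
    rcases lt_trichotomy t astar with h | h | h
    · exact hbal t h
    · subst h; simp [hstar]
    · have : ∑ i, τ i t = ∑ i, ((SW t / SW astar) * u i astar - u i t) := by
        apply Finset.sum_congr rfl; intro i _; exact hhigh i t h htm
      rw [this, Finset.sum_sub_distrib, ← Finset.mul_sum, ← hSW, ← hSW,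
        div_mul_cancel₀ _ (ne_of_gt hpos), sub_self]
  · intro i t htm
    rcases le_or_gt t astar with h | h
    · exact hchain i t h
    · have hUa : U i astar = u i astar := by rw [hU, hstar]; ring
      have hUt : U i t = (SW t / SW astar) * u i astar := by
        rw [hU, hhigh i t h htm]; ring
      have hr : SW t / SW astar ≤ 1 := by
        rw [div_le_one hpos]; exact hdec astar t (le_of_lt h) htm
      have : U i t ≤ U i astar := by
        rw [hUt, hUa]
        nlinarith [hu i astar]
      exact le_trans this (hchain i astar (le_refl _))
end
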